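/- Let M be a binary matrix with empty conflict graph and with no two equal columns, and assume the bipartite graph on S ∪ C with an edge {s,c} exactly when M[s,c]=1 is connected. Order the characters by c < c' iff the column of c is strictly contained in the column of c' (as subsets of S), and call a character maximal if no character is strictly above it. Then any two distinct maximal characters a, b are adjacent, i.e., there exists a species s with M[s,a]=1 and M[s,b]=1. -/

import Mathlib

/-! Common definitions for persistent perfect phylogeny formalizations. -/

/-- `AncRel parent i j` : node `i` is an ancestor (or equal to) node `j`
in the rooted tree given by the parent function. -/
def AncRel (parent : ℕ → ℕ) (i j : ℕ) : Prop := ∃ k : ℕ, parent^[k] j = i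

/-- A persistent perfect phylogeny (p-pp) for the binary matrix `M`.
Nodes are `0, …, n-1`, the root is `0`, and each non-root node `i` has
parent `parent i < i`; the (unique) edge entering `i` is identified with `i`. -/
structure PPTree (S C : Type*) (M : S → C → Bool) where
  n : ℕ
  n_pos : 0 < n
  parent : ℕ → ℕ
  parent_lt : ∀ i, 0 < i → i < n → parent i < i
  label : ℕ → C → Bool
  root_label : ∀ c, label 0 c = false
  /-- for each character there are at most two edges across which its state changes -/
  changes_le_two : ∀ c : C, ∀ i j k : ℕ,
    (0 < i ∧ i < n ∧ label (parent i) c ≠ label i c) →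
    (0 < j ∧ j < n ∧ label (parent j) c ≠ label j c) →
    (0 < k ∧ k < n ∧ label (parent k) c ≠ label k c) →
    i = j ∨ i = k ∨ j = k
  /-- two change edges of the same character lie on one root-to-leaf path,
  the higher one being the gain `c⁺` (0→1) and the lower one the loss `c⁻` (1→0) -/
  changes_on_path : ∀ c : C, ∀ i j : ℕ,
    (0 < i ∧ i < n ∧ label (parent i) c ≠ label i c) →
    (0 < j ∧ j < n ∧ label (parent j) c ≠ label j c) →
    i ≠ j →
    (AncRel parent i j ∧ label (parent i) c = false ∧ label i c = true ∧
      label (parent j) c = true ∧ label j c = false) ∨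
    (AncRel parent j i ∧ label (parent j) c = false ∧ label j c = true ∧
      label (parent i) c = true ∧ label i c = false)
  /-- if a character changes on exactly one edge, the change is a gain (0→1) -/
  single_change_gain : ∀ c : C, ∀ i : ℕ,
    (0 < i ∧ i < n ∧ label (parent i) c ≠ label i c) →
    (∀ j : ℕ, (0 < j ∧ j < n ∧ label (parent j) c ≠ label j c) → j = i) →
    (label (parent i) c = false ∧ label i c = true)
  /-- each row of `M` labels exactly one node of the tree -/
  rows_label : ∀ s : S, ∃! x : ℕ, x < n ∧ ∀ c, label x c = M s c

/-- Character `c` is persistent in the node `x`: the path from the root to `x`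
contains both an edge labeled `c⁺` and an edge labeled `c⁻`. -/
def PPTree.persistentAt {S C : Type*} {M : S → C → Bool} (T : PPTree S C M)
    (x : ℕ) (c : C) : Prop :=
  (∃ i, 0 < i ∧ i < T.n ∧ AncRel T.parent i x ∧
    T.label (T.parent i) c = false ∧ T.label i c = true) ∧
  (∃ j, 0 < j ∧ j < T.n ∧ AncRel T.parent j x ∧
    T.label (T.parent j) c = true ∧ T.label j c = false)

/-- A p-pp tree is consistent with the constraint set `E` if, for every
`(s,c) ∈ E`, the character `c` is not persistent in the species `s`. -/
def PPTree.consistent {S C : Type*} {M : S → C → Bool} (T : PPTree S C M)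
    (E : Set (S × C)) : Prop :=
  ∀ p ∈ E, ∀ x : ℕ, x < T.n → (∀ c, T.label x c = M p.1 c) →
    ¬ T.persistentAt x p.2

/-- Two (distinct) characters are in conflict when all four configurations
`(0,0), (0,1), (1,0), (1,1)` occur among the species. -/
def Conflicting {S C : Type*} (M : S → C → Bool) (c₁ c₂ : C) : Prop :=
  c₁ ≠ c₂ ∧
  (∃ s, M s c₁ = false ∧ M s c₂ = false) ∧
  (∃ s, M s c₁ = false ∧ M s c₂ = true) ∧
  (∃ s, M s c₁ = true ∧ M s c₂ = false) ∧
  (∃ s, M s c₁ = true ∧ M s c₂ = true)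

/-- The conflict graph of `M` is empty: no two characters are in conflict. -/
def EmptyConflictGraph {S C : Type*} (M : S → C → Bool) : Prop :=
  ∀ c₁ c₂ : C, ¬ Conflicting M c₁ c₂

/-- The column of a character, as a set of species. -/
def ColSet {S C : Type*} (M : S → C → Bool) (c : C) : Set S := {s | M s c = true}

/-- Column `c⁺` of the completion of the extended matrix of `(M,E)` determined by
the choice function `f` (the pair `(?,?)` of species `s` and character `c` is
completed to `(1,1)` iff `f s c` holds). -/
def ColPlus {S C : Type*} (M : S → C → Bool) (E : Set (S × C))
    (f : S → C → Prop) (c : C) : Set S :=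
  {s | M s c = true ∨ ((s, c) ∉ E ∧ M s c = false ∧ f s c)}

/-- Column `c⁻` of the completion of the extended matrix of `(M,E)` determined by `f`. -/
def ColMinus {S C : Type*} (M : S → C → Bool) (E : Set (S × C))
    (f : S → C → Prop) (c : C) : Set S :=
  {s | (s, c) ∉ E ∧ M s c = false ∧ f s c}

/-- The column of a signed character (`(c, true)` is `c⁺`, `(c, false)` is `c⁻`). -/
def ColOf {S C : Type*} (M : S → C → Bool) (E : Set (S × C))
    (f : S → C → Prop) : C × Bool → Set S :=
  fun p => if p.2 then ColPlus M E f p.1 else ColMinus M E f p.1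

/-- Two sets are laminar: disjoint or one contains the other. -/
def LaminarPair {S : Type*} (X Y : Set S) : Prop := X ∩ Y = ∅ ∨ X ⊆ Y ∨ Y ⊆ X

/-- The completion of the extended matrix of `(M,E)` given by `f` has pairwise
laminar columns, i.e. it admits a rooted (directed) perfect phylogeny. -/
def LaminarCompletion {S C : Type*} (M : S → C → Bool) (E : Set (S × C))
    (f : S → C → Prop) : Prop :=
  ∀ p q : C × Bool, LaminarPair (ColOf M E f p) (ColOf M E f q)

/-- The state of a character in a red-black graph. -/
inductive CharState : Type
  | inactive : CharState
  | active : CharState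
  | free : CharState
deriving DecidableEq

/-- A red-black graph: an edge-bicolored bipartite graph on species and
characters, together with a state for each character and a set of forbidden
(species, character) pairs. -/
structure RBGraph (S C : Type*) where
  black : S → C → Prop
  red : S → C → Prop
  charState : C → CharState
  forbidden : Set (S × C)

/-- The underlying simple graph of a red-black graph (edges of either color). -/
def RBGraph.graph {S C : Type*} (G : RBGraph S C) : SimpleGraph (S ⊕ C) where
  Adj v w :=
    (∃ s c, v = Sum.inl s ∧ w = Sum.inr c ∧ (G.black s c ∨ G.red s c)) ∨
    (∃ s c, w = Sum.inl s ∧ v = Sum.inr c ∧ (G.black s c ∨ G.red s c))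
  symm := ⟨fun v w h => Or.symm h⟩
  loopless := ⟨by
    rintro v (⟨s, c, h₁, h₂, -⟩ | ⟨s, c, h₁, h₂, -⟩) <;> subst h₁ <;> simp at h₂⟩

/-- The subgraph of a red-black graph formed by the red edges only. -/
def RBGraph.redGraph {S C : Type*} (G : RBGraph S C) : SimpleGraph (S ⊕ C) where
  Adj v w :=
    (∃ s c, v = Sum.inl s ∧ w = Sum.inr c ∧ G.red s c) ∨
    (∃ s c, w = Sum.inl s ∧ v = Sum.inr c ∧ G.red s c)
  symm := ⟨fun v w h => Or.symm h⟩
  loopless := ⟨by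
    rintro v (⟨s, c, h₁, h₂, -⟩ | ⟨s, c, h₁, h₂, -⟩) <;> subst h₁ <;> simp at h₂⟩

/-- The species `s` belongs to the connected component `𝒞(c)` of character `c`. -/
def RBGraph.reach {S C : Type*} (G : RBGraph S C) (c : C) (s : S) : Prop :=
  G.graph.Reachable (Sum.inr c) (Sum.inl s)

/-- The realization of character `c` is possible in `G`. -/
def RealizePossible {S C : Type*} (G : RBGraph S C) (c : C) : Prop :=
  match G.charState c with
  | CharState.inactive => ∀ s, G.reach c s → (s, c) ∉ G.forbidden
  | CharState.active => ∀ s, G.reach c s → G.red s c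
  | CharState.free => False

/-- The realization of character `c` in the red-black graph `G`.
If `c` is inactive: add a red edge `{s,c}` for every species `s ∈ 𝒞(c)` not
adjacent to `c`, delete all black edges incident to `c`, forbid `(s,c)` for all
`s ∉ 𝒞(c)`, and make `c` active.  If `c` is active: delete all red edges
incident to `c` and make `c` free. -/
def realize {S C : Type*} [DecidableEq C] (G : RBGraph S C) (c : C) : RBGraph S C :=
  match G.charState c with
  | CharState.inactive =>
    { black := fun s c' => G.black s c' ∧ c' ≠ c
      red := fun s c' =>
        if c' = c then G.red s c ∨ (G.reach c s ∧ ¬ G.black s c ∧ ¬ G.red s c)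
        else G.red s c'
      charState := fun c' => if c' = c then CharState.active else G.charState c'
      forbidden := G.forbidden ∪ {p | p.2 = c ∧ ¬ G.reach c p.1} }
  | CharState.active =>
    { black := G.black
      red := fun s c' => G.red s c' ∧ c' ≠ c
      charState := fun c' => if c' = c then CharState.free else G.charState c'
      forbidden := G.forbidden }
  | CharState.free => G

/-- Realize a sequence of characters, in order. -/
def realizeList {S C : Type*} [DecidableEq C] (G : RBGraph S C) : List C → RBGraph S C
  | [] => G
  | c :: l => realizeList (realize G c) l

/-- All realizations of the sequence, performed in order, are possible. -/
def AllPossible {S C : Type*} [DecidableEq C] (G : RBGraph S C) : List C → Prop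
  | [] => True
  | c :: l => RealizePossible G c ∧ AllPossible (realize G c) l

/-- The initial red-black graph of the constrained matrix `(M, E)`:
a black edge `{s,c}` iff `M s c = 1`, all characters inactive, forbidden set `E`. -/
def initRB {S C : Type*} (M : S → C → Bool) (E : Set (S × C)) : RBGraph S C :=
  { black := fun s c => M s c = true
    red := fun _ _ => False
    charState := fun _ => CharState.inactive
    forbidden := E }

/-- The red-black graph has no edges at all. -/
def Edgeless {S C : Type*} (G : RBGraph S C) : Prop :=
  ∀ (s : S) (c : C), ¬ G.black s c ∧ ¬ G.red s c

/-- A proper sequence of signed characters: each signed character occurs at most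
once, and `c⁻` occurs only after the corresponding `c⁺`. -/
def ProperSigned {C : Type*} [DecidableEq C] (R : List (C × Bool)) : Prop :=
  (∀ σ : C × Bool, R.count σ ≤ 1) ∧
  (∀ c : C, (c, false) ∈ R →
    ∃ i j : Fin R.length, (i : ℕ) < (j : ℕ) ∧ R.get i = (c, true) ∧ R.get j = (c, false))

/-- A successful c-reduction of the red-black graph of `(M, E)`: a proper signed
sequence containing `c⁺` for every character, all of whose realizations are
possible in order, and whose final red-black graph has no edges. -/
def SuccessfulCReduction {S C : Type*} [DecidableEq C] (M : S → C → Bool)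
    (E : Set (S × C)) (R : List (C × Bool)) : Prop :=
  ProperSigned R ∧ (∀ c : C, (c, true) ∈ R) ∧
  AllPossible (initRB M E) (R.map Prod.fst) ∧
  Edgeless (realizeList (initRB M E) (R.map Prod.fst))

/-- The canonical completion of the extended matrix of `(M,E)` associated with a
successful c-reduction `R`: at the first realization of each character `c`, the
pair of species `s` and character `c` is completed to `(1,1)` iff `s ∈ 𝒞(c)` at
that moment. -/
def canonComp {S C : Type*} [DecidableEq C] (M : S → C → Bool) (E : Set (S × C))
    (R : List (C × Bool)) : S → C → Prop :=
  fun s c =>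
    (realizeList (initRB M E)
      ((R.takeWhile (fun p => decide (p ≠ (c, true)))).map Prod.fst)).reach c s

/-- `L` is a label sequence of node `x` of the p-pp tree `T`: it lists, without
repetition and in root-to-`x` order, exactly the signed characters labeling the
edges on the path from the root to `x` (`(c, true)` stands for `c⁺`,
`(c, false)` for `c⁻`). -/
def IsLabelSeq {S C : Type*} {M : S → C → Bool} (T : PPTree S C M) (x : ℕ)
    (L : List (C × Bool)) : Prop :=
  L.Nodup ∧
  (∀ σ : C × Bool, σ ∈ L ↔ ∃ i, 0 < i ∧ i < T.n ∧ AncRel T.parent i x ∧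
    T.label (T.parent i) σ.1 = (!σ.2) ∧ T.label i σ.1 = σ.2) ∧
  (∀ p q : Fin L.length, (p : ℕ) < (q : ℕ) → ∀ i j : ℕ,
    (0 < i ∧ i < T.n ∧ AncRel T.parent i x ∧
      T.label (T.parent i) (L.get p).1 = (!(L.get p).2) ∧
      T.label i (L.get p).1 = (L.get p).2) →
    (0 < j ∧ j < T.n ∧ AncRel T.parent j x ∧
      T.label (T.parent j) (L.get q).1 = (!(L.get q).2) ∧
      T.label j (L.get q).1 = (L.get q).2) →
    AncRel T.parent i j)

/-- A solution of a General Character Compatibility instance (with all character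
trees equal to the directed path `0 → 1 → 2`). -/
structure GCCSolution (S C : Type*) (α : C → S → Set (Fin 3)) where
  n : ℕ
  n_pos : 0 < n
  parent : ℕ → ℕ
  parent_lt : ∀ i, 0 < i → i < n → parent i < i
  st : ℕ → C → Fin 3
  /-- every species has a node whose states belong to the prescribed sets -/
  species_node : ∀ s : S, ∃ v : ℕ, v < n ∧ ∀ c : C, st v c ∈ α c s
  /-- for each character and state, the nodes carrying that state induce a
  connected subtree: any two of them are joined by a path inside the set,
  through a common ancestor carrying the same state -/
  state_connected : ∀ (c : C) (q : Fin 3) (u v : ℕ), u < n → v < n →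
    st u c = q → st v c = q →
    ∃ r : ℕ, r < n ∧ st r c = q ∧ AncRel parent r u ∧ AncRel parent r v ∧
      (∀ w : ℕ, AncRel parent r w → AncRel parent w u → st w c = q) ∧
      (∀ w : ℕ, AncRel parent r w → AncRel parent w v → st w c = q)
  /-- along each edge a state is unchanged or moves one step along `0 → 1 → 2` -/
  edge_ok : ∀ (c : C) (i : ℕ), 0 < i → i < n →
    st (parent i) c = st i c ∨
    (st (parent i) c = 0 ∧ st i c = 1) ∨
    (st (parent i) c = 1 ∧ st i c = 2)

/-! Two columns without conflict are disjoint, nested, or together cover all species. Hence, as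
`a` is maximal, a column meeting the column of `a` either lies inside it or covers, together
with it, every species; in the latter case it strictly contains the column of `b`, which is
disjoint from that of `a`, contradicting the maximality of `b`. So if `a` and `b` shared no
species, the column of `a` would absorb every column of the connected component of `a`, in
particular the nonempty column of `b`. -/

theorem SimpleGraph.Reachable.of_forall_adj_imp {V : Type*} {G : SimpleGraph V} {P : V → Prop}
    (hP : ∀ ⦃u v⦄, G.Adj u v → P u → P v) {u v : V} (h : G.Reachable u v) (hu : P u) :
    P v := by
  rw [SimpleGraph.reachable_iff_reflTransGen] at h
  induction h with
  | refl => exact hu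
  | tail _ hadj ih => exact hP hadj ih

section

variable {S C : Type*} {M : S → C → Bool}

@[simp]
theorem initRB_graph_adj_inl_inr {E : Set (S × C)} {s : S} {c : C} :
    (initRB M E).graph.Adj (Sum.inl s) (Sum.inr c) ↔ M s c = true := by
  simp [RBGraph.graph, initRB]

@[simp]
theorem initRB_graph_adj_inr_inl {E : Set (S × C)} {s : S} {c : C} :
    (initRB M E).graph.Adj (Sum.inr c) (Sum.inl s) ↔ M s c = true := by
  simp [RBGraph.graph, initRB]

@[simp]
theorem initRB_graph_not_adj_inl_inl {E : Set (S × C)} {s t : S} :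
    ¬ (initRB M E).graph.Adj (Sum.inl s) (Sum.inl t) := by
  simp [RBGraph.graph]

@[simp]
theorem initRB_graph_not_adj_inr_inr {E : Set (S × C)} {c d : C} :
    ¬ (initRB M E).graph.Adj (Sum.inr c) (Sum.inr d) := by
  simp [RBGraph.graph]

theorem colSet_cases_of_not_conflicting {c₁ c₂ : C} (h : ¬ Conflicting M c₁ c₂) :
    Disjoint (ColSet M c₁) (ColSet M c₂) ∨ ColSet M c₁ ⊆ ColSet M c₂ ∨
      ColSet M c₂ ⊆ ColSet M c₁ ∨ ColSet M c₁ ∪ ColSet M c₂ = Set.univ := by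
  by_contra! hne
  obtain ⟨h11, h12, h21, h00⟩ := hne
  obtain ⟨s11, hs11⟩ := Set.not_disjoint_iff.1 h11
  obtain ⟨s10, hs10, hs10'⟩ := Set.not_subset.1 h12
  obtain ⟨s01, hs01, hs01'⟩ := Set.not_subset.1 h21
  obtain ⟨s00, hs00⟩ := (Set.ne_univ_iff_exists_notMem _).1 h00
  simp only [ColSet, Set.mem_ofPred_eq, Set.mem_union, not_or,
    Bool.not_eq_true] at hs11 hs10 hs10' hs01 hs01' hs00
  refine h ⟨fun heq => ?_, ⟨s00, hs00⟩, ⟨s01, hs01', hs01⟩, ⟨s10, hs10, hs10'⟩, ⟨s11, hs11⟩⟩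
  subst heq
  simp [hs10] at hs10'

theorem colSet_subset_of_reachable {E : Set (S × C)} {A : Set S}
    (hA : ∀ c, (ColSet M c ∩ A).Nonempty → ColSet M c ⊆ A) {c d : C}
    (h : (initRB M E).graph.Reachable (Sum.inr c) (Sum.inr d)) (hc : ColSet M c ⊆ A) :
    ColSet M d ⊆ A := by
  let P : S ⊕ C → Prop := Sum.elim (· ∈ A) (ColSet M · ⊆ A)
  refine h.of_forall_adj_imp (P := P) ?_ hc
  rintro (s | c) (t | d) hadj hu <;> simp only [P, Sum.elim_inl, Sum.elim_inr] at hu ⊢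
  · simp at hadj
  · exact hA d ⟨s, initRB_graph_adj_inl_inr.mp hadj, hu⟩
  · exact hu (initRB_graph_adj_inr_inl.mp hadj)
  · simp at hadj

theorem colSet_nonempty_of_connected {E : Set (S × C)} (hconn : (initRB M E).graph.Connected)
    {a b : C} (hab : a ≠ b) : (ColSet M b).Nonempty := by
  have : Nontrivial (S ⊕ C) := ⟨⟨Sum.inr a, Sum.inr b, by simpa using hab⟩⟩
  obtain ⟨s | c, hadj⟩ := hconn.preconnected.exists_adj_of_nontrivial (Sum.inr b)
  · exact ⟨s, initRB_graph_adj_inr_inl.mp hadj⟩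
  · simp at hadj

theorem colSet_subset_of_inter_nonempty (hconf : EmptyConflictGraph M) {a b : C}
    (ha : ∀ c, ¬ ColSet M a ⊂ ColSet M c) (hb : ∀ c, ¬ ColSet M b ⊂ ColSet M c)
    (hab : Disjoint (ColSet M a) (ColSet M b)) {c : C} (hc : (ColSet M c ∩ ColSet M a).Nonempty) :
    ColSet M c ⊆ ColSet M a := by
  obtain ⟨s, hsc, hsa⟩ := hc
  rcases colSet_cases_of_not_conflicting (hconf c a) with hdisj | hca | hac | hcover
  · exact absurd hsa (Set.disjoint_left.1 hdisj hsc)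
  · exact hca
  · exact ((Set.eq_or_ssubset_of_subset hac).resolve_right (ha c)).symm.subset
  · have hbc : ColSet M b ⊆ ColSet M c := fun t htb =>
      (Set.eq_univ_iff_forall.1 hcover t).resolve_right (Set.disjoint_right.1 hab htb)
    exact absurd ((Set.ssubset_iff_of_subset hbc).2 ⟨s, hsc, Set.disjoint_left.1 hab hsa⟩) (hb c)

end

theorem stmt3_general {S C : Type*} (M : S → C → Bool)
    (hconf : EmptyConflictGraph M)
    (hconn : (initRB M (∅ : Set (S × C))).graph.Connected)
    (a b : C) (hab : a ≠ b)
    (ha : ∀ c : C, ¬ ColSet M a ⊂ ColSet M c)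
    (hb : ∀ c : C, ¬ ColSet M b ⊂ ColSet M c) :
    ∃ s : S, M s a = true ∧ M s b = true := by
  by_contra hno
  have hdisj : Disjoint (ColSet M a) (ColSet M b) :=
    Set.disjoint_left.2 fun s hsa hsb => hno ⟨s, hsa, hsb⟩
  have hba : ColSet M b ⊆ ColSet M a :=
    colSet_subset_of_reachable (fun _ => colSet_subset_of_inter_nonempty hconf ha hb hdisj)
      (hconn.preconnected _ _) subset_rfl
  obtain ⟨s, hs⟩ := colSet_nonempty_of_connected hconn hab
  exact Set.disjoint_left.1 hdisj (hba hs) hs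

/-- if `M` has empty conflict graph, no two equal columns, and a
connected bipartite species-character graph, then any two distinct maximal
characters share a species. -/
theorem stmt3 {S C : Type*} [Fintype S] [Fintype C] (M : S → C → Bool)
    (hconf : EmptyConflictGraph M)
    (hcols : ∀ c c' : C, ColSet M c = ColSet M c' → c = c')
    (hconn : (initRB M (∅ : Set (S × C))).graph.Connected)
    (a b : C) (hab : a ≠ b)
    (ha : ∀ c : C, ¬ ColSet M a ⊂ ColSet M c)
    (hb : ∀ c : C, ¬ ColSet M b ⊂ ColSet M c) :
    ∃ s : S, M s a = true ∧ M s b = true :=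
  stmt3_general M hconf hconn a b hab ha hb
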